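/- Assume parallel trends (PT) and no anticipation (NA), and assume V_D is invertible. Then for every l ∈ L, the dynamic fixed-effects estimand satisfies μ_l = Σ_{e=1}^{T} Σ_{l'=0}^{T−e} ω(l; e, l')·CATT(e,l'). In particular, each coefficient μ_l — including the lead coefficients with l < 0 — is a linear combination of post-treatment cohort-specific treatment effects CATT(e,l') with l' ≥ 0, and may load on CATTs from relative periods l' ≠ l. (Proposition 2, main decomposition.) -/

import Mathlib

open MeasureTheory Filter

noncomputable section

/-- Conditional expectation `E[Z | A] := E[Z·1_A] / P(A)` given an event `A`. -/
def cexp {Ω : Type*} [MeasurableSpace Ω] (μ : Measure Ω) (Z : Ω → ℝ) (A : Set Ω) : ℝ :=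
  (∫ ω in A, Z ω ∂μ) / (μ A).toReal

/-- Observed outcome `Y_t := Y∞_t + Σ_{e=1}^{T} (Yᵉ_t − Y∞_t)·1{E = e}`. -/
def obsY {Ω : Type*} (T : ℕ) (E : Ω → ℕ) (Ye : ℕ → ℕ → Ω → ℝ) (Yinf : ℕ → Ω → ℝ)
    (t : ℕ) (ω : Ω) : ℝ :=
  Yinf t ω + ∑ e ∈ Finset.Icc 1 T, (Ye e t ω - Yinf t ω) * (if E ω = e then 1 else 0)

/-- Cohort-specific average treatment effect on the treated,
`CATT(e,l) := E[Yᵉ_{e+l} − Y∞_{e+l} | E = e]`. -/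
def CATT {Ω : Type*} [MeasurableSpace Ω] (μ : Measure Ω) (E : Ω → ℕ)
    (Ye : ℕ → ℕ → Ω → ℝ) (Yinf : ℕ → Ω → ℝ) (e : ℕ) (l : ℤ) : ℝ :=
  cexp μ (fun ω => Ye e ((e : ℤ) + l).toNat ω - Yinf ((e : ℤ) + l).toNat ω) {ω | E ω = e}

/-- Parallel trends in baseline outcome. -/
def PT {Ω : Type*} [MeasurableSpace Ω] (μ : Measure Ω) (T : ℕ) (E : Ω → ℕ)
    (Yinf : ℕ → Ω → ℝ) : Prop :=
  ∀ e ∈ Finset.Icc 1 T, ∀ s ≤ T, ∀ t ≤ T,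
    cexp μ (fun ω => Yinf t ω - Yinf s ω) {ω | E ω = e}
      = ∫ ω, (Yinf t ω - Yinf s ω) ∂μ

/-- No anticipatory behavior. -/
def NA {Ω : Type*} [MeasurableSpace Ω] (μ : Measure Ω) (T : ℕ)
    (Ye : ℕ → ℕ → Ω → ℝ) (Yinf : ℕ → Ω → ℝ) : Prop :=
  ∀ e ∈ Finset.Icc 1 T, ∀ t < e, Ye e t =ᵐ[μ] Yinf t

/-- Relative-time indicator `Dˡ_t := 1{t − E = l}`. -/
def Drel {Ω : Type*} (E : Ω → ℕ) (l : ℤ) (t : ℕ) (ω : Ω) : ℝ :=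
  if (t : ℤ) - (E ω : ℤ) = l then 1 else 0

/-- Two-way demeaned relative-time indicator `D̈ˡ_t`. -/
def ddotRel {Ω : Type*} [MeasurableSpace Ω] (μ : Measure Ω) (T : ℕ) (E : Ω → ℕ)
    (l : ℤ) (t : ℕ) (ω : Ω) : ℝ :=
  Drel E l t ω - (∫ ω', Drel E l t ω' ∂μ)
    - (1 / ((T : ℝ) + 1)) * ∑ s ∈ Finset.range (T + 1), Drel E l s ω
    + (1 / ((T : ℝ) + 1)) * ∑ s ∈ Finset.range (T + 1), ∫ ω', Drel E l s ω' ∂μ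

/-- The matrix `V_D := Σ_{t=0}^{T} E[D̈_t·D̈_tᵀ]`, indexed by the lag set `L`. -/
def VD {Ω : Type*} [MeasurableSpace Ω] (μ : Measure Ω) (T : ℕ) (E : Ω → ℕ)
    (L : Finset ℤ) : Matrix {x // x ∈ L} {x // x ∈ L} ℝ :=
  fun l l' => ∑ t ∈ Finset.range (T + 1),
    ∫ ω, ddotRel μ T E l.1 t ω * ddotRel μ T E l'.1 t ω ∂μ

/-- The vector `c(e,l') := Σ_{t=0}^{T} E[D̈_t·1{E = e}·D^{l'}_t] ∈ ℝ^L`. -/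
def cvec {Ω : Type*} [MeasurableSpace Ω] (μ : Measure Ω) (T : ℕ) (E : Ω → ℕ)
    (L : Finset ℤ) (e : ℕ) (l' : ℤ) : {x // x ∈ L} → ℝ :=
  fun l => ∑ t ∈ Finset.range (T + 1),
    ∫ ω, ddotRel μ T E l.1 t ω * ((if E ω = e then (1 : ℝ) else 0) * Drel E l' t ω) ∂μ

/-- The numerator vector `Σ_{t=0}^{T} E[D̈_t·Y_t] ∈ ℝ^L`. -/
def bvec {Ω : Type*} [MeasurableSpace Ω] (μ : Measure Ω) (T : ℕ) (E : Ω → ℕ)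
    (Ye : ℕ → ℕ → Ω → ℝ) (Yinf : ℕ → Ω → ℝ) (L : Finset ℤ) : {x // x ∈ L} → ℝ :=
  fun l => ∑ t ∈ Finset.range (T + 1),
    ∫ ω, ddotRel μ T E l.1 t ω * obsY T E Ye Yinf t ω ∂μ

/-- The dynamic fixed-effects estimand vector `μ := V_D⁻¹·Σ_t E[D̈_t·Y_t] ∈ ℝ^L`. -/
def muFE {Ω : Type*} [MeasurableSpace Ω] (μ : Measure Ω) (T : ℕ) (E : Ω → ℕ)
    (Ye : ℕ → ℕ → Ω → ℝ) (Yinf : ℕ → Ω → ℝ) (L : Finset ℤ) : {x // x ∈ L} → ℝ :=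
  Matrix.mulVec (VD μ T E L)⁻¹ (bvec μ T E Ye Yinf L)

/-- The weight `ω(l; e, l') := (V_D⁻¹·c(e,l'))_l`. -/
def omegaFE {Ω : Type*} [MeasurableSpace Ω] (μ : Measure Ω) (T : ℕ) (E : Ω → ℕ)
    (L : Finset ℤ) (l : {x // x ∈ L}) (e : ℕ) (l' : ℤ) : ℝ :=
  Matrix.mulVec (VD μ T E L)⁻¹ (cvec μ T E L e l') l

/-!
On the cohort `{E = e}` the demeaned regressor `D̈ˡ_t` is a constant `K(t, e)` and the observed
outcome is `Yᵉ_t`, so `Σ_t E[D̈ˡ_t Y_t] = Σ_{t,e} K(t, e) E[Yᵉ_t 1{E = e}]`. Split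
`Yᵉ_t = (Yᵉ_t − Y∞_t) + Y∞_t`. Parallel trends make the cohort means of `Y∞` additive,
`E[Y∞_t 1{E = e}] = P(E = e) δ_t + β_e`, and `K` annihilates such terms: its sums over `t` vanish
(time demeaning) and its `P(E = e)`-weighted sums over `e` vanish (unit demeaning). By no
anticipation the effect terms vanish for `t < e`, and for `t = e + l'` they equal
`CATT(e, l') P(E = e) K(e + l', e)`, the `l`-th entry of `CATT(e, l') c(e, l')`. Thus
`Σ_t E[D̈_t Y_t] = Σ_{e,l'} CATT(e, l') c(e, l')`, and the linear map `V_D⁻¹` carries this to `μ`.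
-/

section Fibers

variable {Ω α : Type*} [MeasurableSpace Ω] {μ : Measure Ω} [MeasurableSpace α]
  [MeasurableSingletonClass α] {E : Ω → α}

theorem measurableSet_fiber (hE : Measurable E) (a : α) : MeasurableSet {ω | E ω = a} :=
  hE (measurableSet_singleton a)

theorem integral_eq_sum_setIntegral_fiber {G : Type*} [NormedAddCommGroup G] [NormedSpace ℝ G]
    (hE : Measurable E) {s : Finset α} (hs : ∀ᵐ ω ∂μ, E ω ∈ s) {g : Ω → G}
    (hg : ∀ a ∈ s, IntegrableOn g {ω | E ω = a} μ) :
    ∫ ω, g ω ∂μ = ∑ a ∈ s, ∫ ω in {ω | E ω = a}, g ω ∂μ := by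
  have hfibers : ⋃ a ∈ s, {ω | E ω = a} =ᵐ[μ] (Set.univ : Set Ω) :=
    eventuallyEq_univ.2 (hs.mono fun ω h => Set.mem_iUnion₂.2 ⟨E ω, h, rfl⟩)
  rw [← setIntegral_univ, ← setIntegral_congr_set hfibers]
  exact integral_biUnion_finset s (fun a _ => measurableSet_fiber hE a)
    (fun a _ b _ hab => Set.disjoint_left.2 fun ω ha hb => hab (ha.symm.trans hb)) hg

theorem integrableOn_fiber_comp_mul (hE : Measurable E) (k : α → ℝ) {g : Ω → ℝ} {a : α}
    (hg : IntegrableOn g {ω | E ω = a} μ) :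
    IntegrableOn (fun ω => k (E ω) * g ω) {ω | E ω = a} μ :=
  IntegrableOn.congr_fun (hg.const_mul (k a)) (fun ω (hω : E ω = a) => by rw [hω])
    (measurableSet_fiber hE a)

theorem setIntegral_fiber_comp_mul (hE : Measurable E) (k : α → ℝ) (g : Ω → ℝ) (a : α) :
    ∫ ω in {ω | E ω = a}, k (E ω) * g ω ∂μ = k a * ∫ ω in {ω | E ω = a}, g ω ∂μ := by
  rw [← integral_const_mul]
  exact setIntegral_congr_fun (measurableSet_fiber hE a) fun ω (hω : E ω = a) => by rw [hω]

end Fibers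

/-- When `μ A = 0` both sides vanish, `cexp` dividing by `0` there. -/
theorem setIntegral_eq_measureReal_mul_cexp {Ω : Type*} [MeasurableSpace Ω] {μ : Measure Ω}
    [IsFiniteMeasure μ] (Z : Ω → ℝ) (A : Set Ω) :
    ∫ ω in A, Z ω ∂μ = μ.real A * cexp μ Z A := by
  rcases eq_or_ne (μ A) 0 with hA | hA
  · rw [setIntegral_measure_zero Z hA, measureReal_def, hA, ENNReal.toReal_zero, zero_mul]
  · rw [cexp, ← measureReal_def, mul_div_cancel₀]
    exact (ENNReal.toReal_pos hA (measure_ne_top μ A)).ne'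

theorem sum_sum_mul_eq_zero_of_eq_mul_add {ι κ : Type*} {s : Finset ι} {r : Finset κ}
    {K m : ι → κ → ℝ} {p : κ → ℝ} {δ : ι → ℝ} {β : κ → ℝ}
    (hrow : ∀ e ∈ r, ∑ t ∈ s, K t e = 0) (hcol : ∀ t ∈ s, ∑ e ∈ r, K t e * p e = 0)
    (hm : ∀ t ∈ s, ∀ e ∈ r, m t e = p e * δ t + β e) :
    ∑ t ∈ s, ∑ e ∈ r, K t e * m t e = 0 :=
  calc ∑ t ∈ s, ∑ e ∈ r, K t e * m t e
      = ∑ t ∈ s, (∑ e ∈ r, K t e * p e) * δ t + ∑ e ∈ r, (∑ t ∈ s, K t e) * β e := by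
        rw [Finset.sum_congr rfl fun t ht => Finset.sum_congr rfl fun e he => by rw [hm t ht e he]]
        simp only [mul_add, Finset.sum_add_distrib, Finset.sum_mul, mul_assoc]
        congr 1
        exact Finset.sum_comm
    _ = 0 := by
        rw [Finset.sum_eq_zero fun t ht => by rw [hcol t ht, zero_mul],
          Finset.sum_eq_zero fun e he => by rw [hrow e he, zero_mul], add_zero]

theorem obsY_of_eq {Ω : Type*} {T : ℕ} {E : Ω → ℕ} (Ye : ℕ → ℕ → Ω → ℝ) (Yinf : ℕ → Ω → ℝ)
    (t : ℕ) {ω : Ω} {e : ℕ} (he : e ∈ Finset.Icc 1 T) (hω : E ω = e) :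
    obsY T E Ye Yinf t ω = Ye e t ω := by
  simp [obsY, hω, he]

/-- `D̈ˡ_t` depends on `ω` only through the cohort `E ω`; this is its value on the cohort `e`. -/
def ddotRelCohort {Ω : Type*} [MeasurableSpace Ω] (μ : Measure Ω) (T : ℕ) (E : Ω → ℕ) (l : ℤ)
    (t e : ℕ) : ℝ :=
  Drel id l t e - (∫ ω, Drel E l t ω ∂μ)
    - (1 / ((T : ℝ) + 1)) * ∑ s ∈ Finset.range (T + 1), Drel id l s e
    + (1 / ((T : ℝ) + 1)) * ∑ s ∈ Finset.range (T + 1), ∫ ω, Drel E l s ω ∂μ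

section Estimand

variable {Ω : Type*} [MeasurableSpace Ω] (μ : Measure Ω) (T : ℕ) {E : Ω → ℕ}

theorem ddotRel_eq_comp (l : ℤ) (t : ℕ) : ddotRel μ T E l t = ddotRelCohort μ T E l t ∘ E :=
  rfl

theorem measurable_Drel (hE : Measurable E) (l : ℤ) (t : ℕ) : Measurable (Drel E l t) :=
  (measurable_from_top (f := Drel id l t)).comp hE

theorem integrable_Drel [IsFiniteMeasure μ] (hE : Measurable E) (l : ℤ) (t : ℕ) :
    Integrable (Drel E l t) μ :=
  .of_bound (measurable_Drel hE l t).aestronglyMeasurable 1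
    (ae_of_all _ fun ω => by unfold Drel; split_ifs <;> simp)

theorem integral_ddotRel [IsProbabilityMeasure μ] (hE : Measurable E) (l : ℤ) (t : ℕ) :
    ∫ ω, ddotRel μ T E l t ω ∂μ = 0 := by
  have hD := integrable_Drel μ hE l
  unfold ddotRel
  rw [integral_add (by fun_prop) (by fun_prop), integral_sub (by fun_prop) (by fun_prop),
    integral_sub (hD t) (by fun_prop), integral_const_mul, integral_finsetSum _ fun s _ => hD s]
  simp

theorem sum_ddotRelCohort (l : ℤ) (e : ℕ) :
    ∑ t ∈ Finset.range (T + 1), ddotRelCohort μ T E l t e = 0 := by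
  simp only [ddotRelCohort, Finset.sum_add_distrib, Finset.sum_sub_distrib, Finset.sum_const,
    Finset.card_range, nsmul_eq_mul]
  push_cast
  field_simp
  ring

theorem integral_ddotRel_mul (hE : Measurable E) (hcoh : ∀ᵐ ω ∂μ, E ω ∈ Finset.Icc 1 T)
    (l : ℤ) (t : ℕ) {g : Ω → ℝ} (hg : ∀ e ∈ Finset.Icc 1 T, IntegrableOn g {ω | E ω = e} μ) :
    ∫ ω, ddotRel μ T E l t ω * g ω ∂μ
      = ∑ e ∈ Finset.Icc 1 T, ddotRelCohort μ T E l t e * ∫ ω in {ω | E ω = e}, g ω ∂μ :=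
  (integral_eq_sum_setIntegral_fiber hE hcoh fun e he =>
    integrableOn_fiber_comp_mul hE (ddotRelCohort μ T E l t) (hg e he)).trans
    (Finset.sum_congr rfl fun e _ => setIntegral_fiber_comp_mul hE (ddotRelCohort μ T E l t) g e)

theorem sum_ddotRelCohort_mul_measureReal [IsProbabilityMeasure μ] (hE : Measurable E)
    (hcoh : ∀ᵐ ω ∂μ, E ω ∈ Finset.Icc 1 T) (l : ℤ) (t : ℕ) :
    ∑ e ∈ Finset.Icc 1 T, ddotRelCohort μ T E l t e * μ.real {ω | E ω = e} = 0 := by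
  have h := integral_ddotRel_mul μ T hE hcoh l t (g := fun _ => 1) fun e _ => integrableOn_const
  simpa [integral_ddotRel μ T hE] using h.symm

theorem setIntegral_fiber_eq_of_PT [IsFiniteMeasure μ] {Yinf : ℕ → Ω → ℝ} (hPT : PT μ T E Yinf)
    (hYinf : ∀ t ≤ T, Integrable (Yinf t) μ) {e : ℕ} (he : e ∈ Finset.Icc 1 T) {t : ℕ}
    (ht : t ≤ T) :
    ∫ ω in {ω | E ω = e}, Yinf t ω ∂μ
      = μ.real {ω | E ω = e} * (∫ ω, Yinf t ω ∂μ - ∫ ω, Yinf 0 ω ∂μ)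
        + ∫ ω in {ω | E ω = e}, Yinf 0 ω ∂μ := by
  have h0 := hYinf 0 (Nat.zero_le T)
  rw [← integral_sub (hYinf t ht) h0, ← hPT e he 0 (Nat.zero_le T) t ht,
    ← setIntegral_eq_measureReal_mul_cexp, integral_sub (hYinf t ht).integrableOn h0.integrableOn,
    sub_add_cancel]

/-- Parallel trends make the cohort means of `Y∞` additive in cohort and time, and the two-way
demeaned regressor annihilates additive effects. -/
theorem sum_sum_ddotRelCohort_mul_setIntegral_Yinf [IsProbabilityMeasure μ] (hE : Measurable E)
    (hcoh : ∀ᵐ ω ∂μ, E ω ∈ Finset.Icc 1 T) {Yinf : ℕ → Ω → ℝ} (hPT : PT μ T E Yinf)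
    (hYinf : ∀ t ≤ T, Integrable (Yinf t) μ) (l : ℤ) :
    ∑ t ∈ Finset.range (T + 1), ∑ e ∈ Finset.Icc 1 T,
      ddotRelCohort μ T E l t e * ∫ ω in {ω | E ω = e}, Yinf t ω ∂μ = 0 :=
  sum_sum_mul_eq_zero_of_eq_mul_add (fun e _ => sum_ddotRelCohort μ T l e)
    (fun t _ => sum_ddotRelCohort_mul_measureReal μ T hE hcoh l t)
    fun _ ht _ he => setIntegral_fiber_eq_of_PT μ T hPT hYinf he
      (Nat.lt_succ_iff.1 (Finset.mem_range.1 ht))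

theorem CATT_natCast (Ye : ℕ → ℕ → Ω → ℝ) (Yinf : ℕ → Ω → ℝ) (e k : ℕ) :
    CATT μ E Ye Yinf e k = cexp μ (fun ω => Ye e (e + k) ω - Yinf (e + k) ω) {ω | E ω = e} := by
  rw [CATT, ← Nat.cast_add, Int.toNat_natCast]

theorem setIntegral_fiber_sub_eq_zero_of_NA {Ye : ℕ → ℕ → Ω → ℝ} {Yinf : ℕ → Ω → ℝ}
    (hNA : NA μ T Ye Yinf) {e t : ℕ} (he : e ∈ Finset.Icc 1 T) (ht : t < e) :
    ∫ ω in {ω | E ω = e}, (Ye e t ω - Yinf t ω) ∂μ = 0 :=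
  integral_eq_zero_of_ae <| (ae_restrict_of_ae (hNA e he t ht)).mono fun _ h => sub_eq_zero.2 h

theorem sum_ddotRelCohort_mul_setIntegral_sub [IsFiniteMeasure μ] {Ye : ℕ → ℕ → Ω → ℝ}
    {Yinf : ℕ → Ω → ℝ} (hNA : NA μ T Ye Yinf) {e : ℕ} (he : e ∈ Finset.Icc 1 T) (l : ℤ) :
    ∑ t ∈ Finset.range (T + 1),
        ddotRelCohort μ T E l t e * ∫ ω in {ω | E ω = e}, (Ye e t ω - Yinf t ω) ∂μ
      = ∑ k ∈ Finset.range (T - e + 1),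
          CATT μ E Ye Yinf e k * (ddotRelCohort μ T E l (e + k) e * μ.real {ω | E ω = e}) := by
  obtain ⟨-, heT⟩ := Finset.mem_Icc.1 he
  rw [← Finset.sum_range_add_sum_Ico _ (by omega : e ≤ T + 1), Finset.sum_eq_zero fun t ht => by
      rw [setIntegral_fiber_sub_eq_zero_of_NA μ T hNA he (Finset.mem_range.1 ht), mul_zero],
    zero_add, Finset.sum_Ico_eq_sum_range, show T + 1 - e = T - e + 1 by omega]
  refine Finset.sum_congr rfl fun k _ => ?_
  rw [setIntegral_eq_measureReal_mul_cexp, CATT_natCast]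
  ring

theorem integral_ddotRel_mul_obsY (hE : Measurable E) (hcoh : ∀ᵐ ω ∂μ, E ω ∈ Finset.Icc 1 T)
    {Ye : ℕ → ℕ → Ω → ℝ} (hYe : ∀ e ∈ Finset.Icc 1 T, ∀ t ≤ T, Integrable (Ye e t) μ)
    (Yinf : ℕ → Ω → ℝ) (l : ℤ) {t : ℕ} (ht : t ≤ T) :
    ∫ ω, ddotRel μ T E l t ω * obsY T E Ye Yinf t ω ∂μ
      = ∑ e ∈ Finset.Icc 1 T, ddotRelCohort μ T E l t e * ∫ ω in {ω | E ω = e}, Ye e t ω ∂μ := by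
  have hfiber : ∀ e ∈ Finset.Icc 1 T, Set.EqOn (Ye e t) (obsY T E Ye Yinf t) {ω | E ω = e} :=
    fun e he _ hω => (obsY_of_eq Ye Yinf t he hω).symm
  rw [integral_ddotRel_mul μ T hE hcoh l t fun e he =>
    (hYe e he t ht).integrableOn.congr_fun (hfiber e he) (measurableSet_fiber hE e)]
  exact Finset.sum_congr rfl fun e he => by
    rw [setIntegral_congr_fun (measurableSet_fiber hE e) (hfiber e he)]

theorem sum_integral_ddotRel_mul_obsY [IsProbabilityMeasure μ] (hE : Measurable E)
    (hcoh : ∀ᵐ ω ∂μ, E ω ∈ Finset.Icc 1 T) {Ye : ℕ → ℕ → Ω → ℝ} {Yinf : ℕ → Ω → ℝ}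
    (hYe : ∀ e ∈ Finset.Icc 1 T, ∀ t ≤ T, Integrable (Ye e t) μ)
    (hYinf : ∀ t ≤ T, Integrable (Yinf t) μ) (hPT : PT μ T E Yinf) (hNA : NA μ T Ye Yinf)
    (l : ℤ) :
    ∑ t ∈ Finset.range (T + 1), ∫ ω, ddotRel μ T E l t ω * obsY T E Ye Yinf t ω ∂μ
      = ∑ e ∈ Finset.Icc 1 T, ∑ k ∈ Finset.range (T - e + 1),
          CATT μ E Ye Yinf e k * (ddotRelCohort μ T E l (e + k) e * μ.real {ω | E ω = e}) :=
  calc _ = ∑ t ∈ Finset.range (T + 1), ∑ e ∈ Finset.Icc 1 T,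
          ddotRelCohort μ T E l t e * ∫ ω in {ω | E ω = e}, Ye e t ω ∂μ :=
        Finset.sum_congr rfl fun t ht => integral_ddotRel_mul_obsY μ T hE hcoh hYe Yinf l
          (Nat.lt_succ_iff.1 (Finset.mem_range.1 ht))
    _ = ∑ t ∈ Finset.range (T + 1), ∑ e ∈ Finset.Icc 1 T,
          ddotRelCohort μ T E l t e * ∫ ω in {ω | E ω = e}, (Ye e t ω - Yinf t ω) ∂μ
        + ∑ t ∈ Finset.range (T + 1), ∑ e ∈ Finset.Icc 1 T,
          ddotRelCohort μ T E l t e * ∫ ω in {ω | E ω = e}, Yinf t ω ∂μ := by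
        simp only [← Finset.sum_add_distrib, ← mul_add]
        refine Finset.sum_congr rfl fun t ht => Finset.sum_congr rfl fun e he => ?_
        have ht' := Nat.lt_succ_iff.1 (Finset.mem_range.1 ht)
        rw [integral_sub (hYe e he t ht').integrableOn (hYinf t ht').integrableOn, sub_add_cancel]
    _ = ∑ e ∈ Finset.Icc 1 T, ∑ t ∈ Finset.range (T + 1),
          ddotRelCohort μ T E l t e * ∫ ω in {ω | E ω = e}, (Ye e t ω - Yinf t ω) ∂μ := by
        rw [sum_sum_ddotRelCohort_mul_setIntegral_Yinf μ T hE hcoh hPT hYinf, add_zero,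
          Finset.sum_comm]
    _ = _ := Finset.sum_congr rfl fun e he => sum_ddotRelCohort_mul_setIntegral_sub μ T hNA he l

theorem cvec_apply (hE : Measurable E) (L : Finset ℤ) {e k : ℕ} (hek : e + k ≤ T)
    (l : {x // x ∈ L}) :
    cvec μ T E L e k l = ddotRelCohort μ T E l (e + k) e * μ.real {ω | E ω = e} := by
  have hterm : ∀ t, ∫ ω, ddotRel μ T E l t ω
        * ((if E ω = e then (1 : ℝ) else 0) * Drel E k t ω) ∂μ
      = if t = e + k then ddotRelCohort μ T E l t e * μ.real {ω | E ω = e} else 0 := by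
    intro t
    have hind : (fun ω => ddotRel μ T E l t ω
          * ((if E ω = e then (1 : ℝ) else 0) * Drel E k t ω))
        = Set.indicator {ω | E ω = e}
            fun _ => if t = e + k then ddotRelCohort μ T E l t e else 0 := by
      funext ω
      by_cases hω : E ω = e
      · have hlag : (t : ℤ) - e = k ↔ t = e + k := by omega
        simp [Drel, ddotRel_eq_comp, hω, hlag]
      · simp [hω]
    rw [hind, integral_indicator_const _ (measurableSet_fiber hE e)]
    split_ifs <;> simp [mul_comm]
  simp only [cvec, hterm, Finset.sum_ite_eq', Finset.mem_range, show e + k < T + 1 by omega,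
    if_true]

theorem bvec_eq_sum_CATT_smul_cvec [IsProbabilityMeasure μ] (hE : Measurable E)
    (hcoh : ∀ᵐ ω ∂μ, E ω ∈ Finset.Icc 1 T) {Ye : ℕ → ℕ → Ω → ℝ} {Yinf : ℕ → Ω → ℝ}
    (hYe : ∀ e ∈ Finset.Icc 1 T, ∀ t ≤ T, Integrable (Ye e t) μ)
    (hYinf : ∀ t ≤ T, Integrable (Yinf t) μ) (hPT : PT μ T E Yinf) (hNA : NA μ T Ye Yinf)
    (L : Finset ℤ) :
    bvec μ T E Ye Yinf L = ∑ e ∈ Finset.Icc 1 T, ∑ k ∈ Finset.range (T - e + 1),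
      CATT μ E Ye Yinf e k • cvec μ T E L e k := by
  ext l
  simp only [bvec, Finset.sum_apply, Pi.smul_apply, smul_eq_mul,
    sum_integral_ddotRel_mul_obsY μ T hE hcoh hYe hYinf hPT hNA]
  refine Finset.sum_congr rfl fun e he => Finset.sum_congr rfl fun k hk => ?_
  have heT := (Finset.mem_Icc.1 he).2
  rw [cvec_apply μ T hE L (by rw [Finset.mem_range] at hk; omega)]

end Estimand

theorem dynamic_fe_estimand_decomposition_general
    {Ω : Type*} [MeasurableSpace Ω] (μ : Measure Ω) [IsProbabilityMeasure μ]
    (T : ℕ)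
    (E : Ω → ℕ) (hE : Measurable E)
    (hsupp : μ {ω | 1 ≤ E ω ∧ E ω ≤ T} = 1)
    (Ye : ℕ → ℕ → Ω → ℝ) (Yinf : ℕ → Ω → ℝ)
    (hL2e : ∀ e ∈ Finset.Icc 1 T, ∀ t ≤ T, MemLp (Ye e t) 2 μ)
    (hL2inf : ∀ t ≤ T, MemLp (Yinf t) 2 μ)
    (hPT : PT μ T E Yinf) (hNA : NA μ T Ye Yinf)
    (L : Finset ℤ) :
    ∀ l : {x // x ∈ L},
      muFE μ T E Ye Yinf L l
        = ∑ e ∈ Finset.Icc 1 T, ∑ l' ∈ Finset.range (T - e + 1),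
            omegaFE μ T E L l e (l' : ℤ) * CATT μ E Ye Yinf e (l' : ℤ) := by
  intro l
  have hcoh : ∀ᵐ ω ∂μ, E ω ∈ Finset.Icc 1 T :=
    ((ae_iff_measure_eq (p := fun ω => 1 ≤ E ω ∧ E ω ≤ T)
      (hE measurableSet_Icc).nullMeasurableSet).2 (by rw [hsupp, measure_univ])).mono
      fun _ h => Finset.mem_Icc.2 h
  have hYe e he t ht : Integrable (Ye e t) μ := (hL2e e he t ht).integrable one_le_two
  have hYinf t ht : Integrable (Yinf t) μ := (hL2inf t ht).integrable one_le_two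
  simp only [muFE, omegaFE, bvec_eq_sum_CATT_smul_cvec μ T hE hcoh hYe hYinf hPT hNA,
    Matrix.mulVec_sum, Matrix.mulVec_smul, Finset.sum_apply, Pi.smul_apply, smul_eq_mul, mul_comm]

/-- Proposition 2 (main decomposition): under PT and NA, with `V_D` invertible, each dynamic
fixed-effects coefficient `μ_l` is a linear combination of post-treatment `CATT(e,l')`'s. -/
theorem dynamic_fe_estimand_decomposition
    {Ω : Type*} [MeasurableSpace Ω] (μ : Measure Ω) [IsProbabilityMeasure μ]
    (T : ℕ) (hT : 1 ≤ T)
    (E : Ω → ℕ) (hE : Measurable E)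
    (hsupp : μ {ω | 1 ≤ E ω ∧ E ω ≤ T} = 1)
    (hpos : ∀ e ∈ Finset.Icc 1 T, 0 < μ {ω | E ω = e})
    (Ye : ℕ → ℕ → Ω → ℝ) (Yinf : ℕ → Ω → ℝ)
    (hL2e : ∀ e ∈ Finset.Icc 1 T, ∀ t ≤ T, MemLp (Ye e t) 2 μ)
    (hL2inf : ∀ t ≤ T, MemLp (Yinf t) 2 μ)
    (hPT : PT μ T E Yinf) (hNA : NA μ T Ye Yinf)
    (L : Finset ℤ) (hL1 : L ⊆ Finset.Icc (-(T : ℤ)) ((T : ℤ) - 1))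
    (hL2 : Finset.Icc (0 : ℤ) ((T : ℤ) - 1) ⊆ L)
    (hVD : IsUnit (VD μ T E L).det) :
    ∀ l : {x // x ∈ L},
      muFE μ T E Ye Yinf L l
        = ∑ e ∈ Finset.Icc 1 T, ∑ l' ∈ Finset.range (T - e + 1),
            omegaFE μ T E L l e (l' : ℤ) * CATT μ E Ye Yinf e (l' : ℤ) :=
  dynamic_fe_estimand_decomposition_general μ T E hE hsupp Ye Yinf hL2e hL2inf hPT hNA L

end
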